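/- Let n be a positive integer and σ a real number with 0 < σ < 1. Then the series T(x, y) = Σ_{k=n}^∞ σ^k φ_k(x) φ_k(y) converges for all real x, y, the resulting function is differentiable in x and in y with the partial derivatives obtained by term-wise differentiation, and for all real x, y: (x + ∂_x)T(x, y) − σ (y − ∂_y)T(x, y) = 2 σ^n a_n φ_{n−1}(x) φ_n(y), where a_n = √(n/2). -/

import Mathlib

/-- The physicist Hermite polynomials, as real functions:
`H₀ = 1`, `H₁(x) = 2x`, `H_{n+2}(x) = 2x·H_{n+1}(x) − 2(n+1)·H_n(x)`. -/
noncomputable def physHermite : ℕ → ℝ → ℝ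
  | 0 => fun _ => 1
  | 1 => fun x => 2 * x
  | (n + 2) => fun x => 2 * x * physHermite (n + 1) x - 2 * (n + 1) * physHermite n x

/-- The normalized Hermite polynomials `p_k(x) = H_k(x)/√(2^k k! √π)`. -/
noncomputable def normHermite (k : ℕ) (x : ℝ) : ℝ :=
  physHermite k x / Real.sqrt (2 ^ k * k.factorial * Real.sqrt Real.pi)

/-- The harmonic oscillator functions `φ_k(x) = e^{−x²/2} p_k(x)`. -/
noncomputable def oscFun (k : ℕ) (x : ℝ) : ℝ :=
  Real.exp (-x ^ 2 / 2) * normHermite k x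

/-- The tail kernel `T(x, y) = Σ_{k=n}^∞ σ^k φ_k(x) φ_k(y)` from the proof of Lemma 3 of
Tracy–Widom, "Differential Equations for Dyson Processes" (indexed by `k = n + j`). -/
noncomputable def hermiteTail (n : ℕ) (σ : ℝ) (x y : ℝ) : ℝ :=
  ∑' j : ℕ, σ ^ (n + j) * oscFun (n + j) x * oscFun (n + j) y

/-! `x + ∂ₓ` and `y - ∂_y` are the lowering and raising operators of the harmonic oscillator:
`(x + ∂)φ_k = √(2k) φ_{k-1}` and `(y - ∂)φ_k = √(2(k+1)) φ_{k+1}`. Applied termwise, they turn the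
two series into `Σ_{k ≥ n} g_k` and `Σ_{k > n} g_k` with `g_k = σ^k √(2k) φ_{k-1}(x) φ_k(y)`, so the
left-hand side telescopes to `g_n`.

Termwise differentiation is justified by the three-term recurrence, which gives
`|φ_k(u)| ≤ ∏_{j<k} (1 + 2r/√(2(j+1)))` for `|u| ≤ r`. This bound grows subexponentially, so
the series are dominated, locally uniformly, by one whose ratio of consecutive terms tends to
`σ < 1`. -/

open Finset Filter Topology

theorem physHermite_succ (k : ℕ) (x : ℝ) :
    physHermite (k + 1) x = 2 * x * physHermite k x - 2 * k * physHermite (k - 1) x := by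
  cases k with
  | zero => simp [physHermite]
  | succ k => simp [physHermite]

theorem hasDerivAt_physHermite : ∀ (k : ℕ) (x : ℝ),
    HasDerivAt (physHermite k) (2 * k * physHermite (k - 1) x) x
  | 0, x => by simpa [physHermite] using hasDerivAt_const x (1 : ℝ)
  | 1, x => by simpa [physHermite] using (hasDerivAt_id x).const_mul (2 : ℝ)
  | k + 2, x => by
    have h : HasDerivAt (fun y ↦ 2 * y * physHermite (k + 1) y - 2 * (k + 1) * physHermite k y)
        _ x := (((hasDerivAt_id' x).const_mul 2).mul (hasDerivAt_physHermite (k + 1) x)).sub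
          ((hasDerivAt_physHermite k x).const_mul (2 * ((k : ℝ) + 1)))
    refine h.congr_deriv ?_
    rw [show k + 2 - 1 = k + 1 from rfl, physHermite_succ k x]
    push_cast
    ring

noncomputable def hermiteNormConst (k : ℕ) : ℝ := √(2 ^ k * k.factorial * √Real.pi)

theorem hermiteNormConst_pos (k : ℕ) : 0 < hermiteNormConst k :=
  Real.sqrt_pos.2 (by positivity)

theorem hermiteNormConst_succ (k : ℕ) :
    hermiteNormConst (k + 1) = √(2 * (k + 1)) * hermiteNormConst k := by
  rw [hermiteNormConst, hermiteNormConst, ← Real.sqrt_mul (by positivity)]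
  push_cast [Nat.factorial_succ]
  ring_nf

theorem normHermite_eq_div (k : ℕ) (x : ℝ) :
    normHermite k x = physHermite k x / hermiteNormConst k := rfl

theorem one_le_hermiteNormConst_zero : 1 ≤ hermiteNormConst 0 := by
  have : 1 ≤ √Real.pi := Real.one_le_sqrt.2 (by linarith [Real.pi_gt_three])
  simpa [hermiteNormConst] using this

theorem two_mul_div_hermiteNormConst (k : ℕ) :
    2 * k / hermiteNormConst k = √(2 * k) / hermiteNormConst (k - 1) := by
  cases k with
  | zero => simp
  | succ k =>
    have hs : 0 < √(2 * ((k : ℝ) + 1)) := Real.sqrt_pos.2 (by positivity)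
    rw [hermiteNormConst_succ, Nat.add_sub_cancel, ← div_div, Nat.cast_succ]
    congr 1
    rw [div_eq_iff hs.ne', Real.mul_self_sqrt (by positivity)]

theorem hasDerivAt_normHermite (k : ℕ) (x : ℝ) :
    HasDerivAt (normHermite k) (√(2 * k) * normHermite (k - 1) x) x := by
  refine ((hasDerivAt_physHermite k x).div_const (hermiteNormConst k)).congr_deriv ?_
  rw [mul_div_right_comm, two_mul_div_hermiteNormConst, normHermite_eq_div]
  ring

theorem sqrt_mul_normHermite_succ (k : ℕ) (x : ℝ) :
    √(2 * (k + 1)) * normHermite (k + 1) x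
      = 2 * x * normHermite k x - √(2 * k) * normHermite (k - 1) x := by
  have hs : 0 < √(2 * ((k : ℝ) + 1)) := Real.sqrt_pos.2 (by positivity)
  simp only [normHermite_eq_div]
  rw [hermiteNormConst_succ, mul_comm _ (hermiteNormConst k), ← div_div, mul_div_cancel₀ _ hs.ne',
    physHermite_succ, sub_div, mul_div_right_comm (2 * (k : ℝ)), two_mul_div_hermiteNormConst]
  ring

theorem hasDerivAt_oscFun (k : ℕ) (x : ℝ) :
    HasDerivAt (oscFun k) (√(2 * k) * oscFun (k - 1) x - x * oscFun k x) x := by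
  have hquad : HasDerivAt (fun y : ℝ ↦ -y ^ 2 / 2) (-x) x :=
    (((hasDerivAt_pow 2 x).neg).div_const 2).congr_deriv (by push_cast; ring)
  refine (hquad.exp.mul (hasDerivAt_normHermite k x)).congr_deriv ?_
  simp only [oscFun]
  ring

theorem sqrt_mul_oscFun_succ (k : ℕ) (x : ℝ) :
    √(2 * (k + 1)) * oscFun (k + 1) x = 2 * x * oscFun k x - √(2 * k) * oscFun (k - 1) x := by
  simp only [oscFun]
  linear_combination Real.exp (-x ^ 2 / 2) * sqrt_mul_normHermite_succ k x

theorem mul_oscFun_add_deriv (k : ℕ) (x : ℝ) :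
    x * oscFun k x + deriv (oscFun k) x = √(2 * k) * oscFun (k - 1) x := by
  rw [(hasDerivAt_oscFun k x).deriv]
  ring

theorem mul_oscFun_sub_deriv (k : ℕ) (x : ℝ) :
    x * oscFun k x - deriv (oscFun k) x = √(2 * (k + 1)) * oscFun (k + 1) x := by
  rw [(hasDerivAt_oscFun k x).deriv, sqrt_mul_oscFun_succ]
  ring

theorem abs_oscFun_zero_le_one (x : ℝ) : |oscFun 0 x| ≤ 1 := by
  have hexp : Real.exp (-x ^ 2 / 2) ≤ 1 := Real.exp_le_one_iff.2 (by nlinarith [sq_nonneg x])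
  have hc : 1 / hermiteNormConst 0 ≤ 1 := by
    rw [div_le_one (hermiteNormConst_pos 0)]; exact one_le_hermiteNormConst_zero
  rw [oscFun, normHermite_eq_div, abs_mul, abs_of_pos (Real.exp_pos _),
    abs_of_pos (by simpa [physHermite] using hermiteNormConst_pos 0)]
  simpa [physHermite] using mul_le_one₀ hexp (one_div_pos.2 (hermiteNormConst_pos 0)).le hc

noncomputable def oscGrowth (r : ℝ) (k : ℕ) : ℝ := ∏ j ∈ range k, (1 + 2 * r / √(2 * (j + 1)))

theorem oscGrowth_succ (r : ℝ) (k : ℕ) :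
    oscGrowth r (k + 1) = oscGrowth r k * (1 + 2 * r / √(2 * (k + 1))) :=
  prod_range_succ _ _

section oscGrowth

variable {r : ℝ}

theorem one_le_oscGrowth_factor (hr : 0 ≤ r) (j : ℕ) : 1 ≤ 1 + 2 * r / √(2 * (j + 1)) :=
  le_add_of_nonneg_right (by positivity)

theorem one_le_oscGrowth (hr : 0 ≤ r) (k : ℕ) : 1 ≤ oscGrowth r k :=
  Finset.one_le_prod fun j _ ↦ one_le_oscGrowth_factor hr j

theorem monotone_oscGrowth (hr : 0 ≤ r) : Monotone (oscGrowth r) :=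
  monotone_nat_of_le_succ fun k ↦ by
    rw [oscGrowth_succ]
    exact le_mul_of_one_le_right (zero_le_one.trans (one_le_oscGrowth hr k))
      (one_le_oscGrowth_factor hr k)

theorem abs_oscFun_le_oscGrowth (k : ℕ) {u : ℝ} (hu : |u| ≤ r) : |oscFun k u| ≤ oscGrowth r k := by
  have hr : 0 ≤ r := (abs_nonneg u).trans hu
  induction k using Nat.strong_induction_on with
  | _ k ih =>
    cases k with
    | zero => simpa [oscGrowth] using abs_oscFun_zero_le_one u
    | succ m =>
      have hs : 0 < √(2 * ((m : ℝ) + 1)) := Real.sqrt_pos.2 (by positivity)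
      have hm := ih m (by omega)
      have hprev : |oscFun (m - 1) u| ≤ oscGrowth r m :=
        (ih (m - 1) (by omega)).trans (monotone_oscGrowth hr (Nat.sub_le m 1))
      have hsqrt : √(2 * (m : ℝ)) ≤ √(2 * ((m : ℝ) + 1)) := Real.sqrt_le_sqrt (by linarith)
      refine le_of_mul_le_mul_left ?_ hs
      calc √(2 * ((m : ℝ) + 1)) * |oscFun (m + 1) u|
          = |2 * u * oscFun m u - √(2 * m) * oscFun (m - 1) u| := by
            rw [← sqrt_mul_oscFun_succ, abs_mul, abs_of_pos hs]
        _ ≤ |2 * u * oscFun m u| + |√(2 * m) * oscFun (m - 1) u| := abs_sub _ _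
        _ = 2 * |u| * |oscFun m u| + √(2 * m) * |oscFun (m - 1) u| := by
            rw [abs_mul, abs_mul, abs_mul, abs_two, abs_of_nonneg (Real.sqrt_nonneg _)]
        _ ≤ 2 * r * oscGrowth r m + √(2 * ((m : ℝ) + 1)) * oscGrowth r m := by gcongr
        _ = √(2 * ((m : ℝ) + 1)) * oscGrowth r (m + 1) := by
            rw [oscGrowth_succ]
            field_simp
            ring

end oscGrowth

noncomputable def oscBound (r : ℝ) (k : ℕ) : ℝ := (k + 1) * (1 + r) * oscGrowth r k

section oscBound

variable {r : ℝ}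

theorem oscBound_pos (hr : 0 ≤ r) (k : ℕ) : 0 < oscBound r k :=
  mul_pos (by positivity) (zero_lt_one.trans_le (one_le_oscGrowth hr k))

theorem oscGrowth_le_oscBound (hr : 0 ≤ r) (k : ℕ) : oscGrowth r k ≤ oscBound r k :=
  le_mul_of_one_le_left (zero_le_one.trans (one_le_oscGrowth hr k))
    (one_le_mul_of_one_le_of_one_le (by simp) (by linarith))

theorem abs_oscFun_le_oscBound (k : ℕ) {u : ℝ} (hu : |u| ≤ r) : |oscFun k u| ≤ oscBound r k :=
  (abs_oscFun_le_oscGrowth k hu).trans (oscGrowth_le_oscBound ((abs_nonneg u).trans hu) k)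

theorem abs_deriv_oscFun_le_oscBound (k : ℕ) {u : ℝ} (hu : |u| ≤ r) :
    |deriv (oscFun k) u| ≤ oscBound r k := by
  have hr : 0 ≤ r := (abs_nonneg u).trans hu
  have hG : 0 ≤ oscGrowth r k := zero_le_one.trans (one_le_oscGrowth hr k)
  have hprev : |oscFun (k - 1) u| ≤ oscGrowth r k :=
    (abs_oscFun_le_oscGrowth (k - 1) hu).trans (monotone_oscGrowth hr (Nat.sub_le k 1))
  have hsqrt : √(2 * (k : ℝ)) ≤ k + 1 :=
    Real.sqrt_le_iff.2 ⟨by positivity, by nlinarith⟩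
  calc |deriv (oscFun k) u|
      = |√(2 * k) * oscFun (k - 1) u - u * oscFun k u| := by rw [(hasDerivAt_oscFun k u).deriv]
    _ ≤ |√(2 * k) * oscFun (k - 1) u| + |u * oscFun k u| := abs_sub _ _
    _ = √(2 * k) * |oscFun (k - 1) u| + |u| * |oscFun k u| := by
        rw [abs_mul, abs_mul, abs_of_nonneg (Real.sqrt_nonneg _)]
    _ ≤ (k + 1) * oscGrowth r k + r * oscGrowth r k := by
        gcongr
        exact abs_oscFun_le_oscGrowth k hu
    _ ≤ oscBound r k := by
        rw [oscBound]
        nlinarith [mul_nonneg hr (Nat.cast_nonneg (α := ℝ) k)]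

theorem summable_pow_mul_oscBound_sq {σ : ℝ} (hσ0 : 0 < σ) (hσ1 : σ < 1) (hr : 0 ≤ r) :
    Summable fun k ↦ σ ^ k * oscBound r k ^ 2 := by
  have hpos (k : ℕ) : 0 < σ ^ k * oscBound r k ^ 2 := by
    have := oscBound_pos hr k
    positivity
  refine summable_of_ratio_test_tendsto_lt_one hσ1 (.of_forall fun k ↦ (hpos k).ne') ?_
  have hratio (k : ℕ) : ‖σ ^ (k + 1) * oscBound r (k + 1) ^ 2‖ / ‖σ ^ k * oscBound r k ^ 2‖
      = σ * ((1 + 1 / (k + 1)) * (1 + 2 * r / √(2 * (k + 1)))) ^ 2 := by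
    have hG : oscGrowth r k ≠ 0 := (zero_lt_one.trans_le (one_le_oscGrowth hr k)).ne'
    rw [Real.norm_of_nonneg (hpos _).le, Real.norm_of_nonneg (hpos _).le, oscBound, oscBound,
      oscGrowth_succ]
    field_simp
    push_cast
    ring
  have hinv : Tendsto (fun k : ℕ ↦ 1 / ((k : ℝ) + 1)) atTop (𝓝 0) :=
    tendsto_one_div_add_atTop_nhds_zero_nat
  have hfactor : Tendsto (fun k : ℕ ↦ 2 * r / √(2 * ((k : ℝ) + 1))) atTop (𝓝 0) :=
    tendsto_const_nhds.div_atTop <| Real.tendsto_sqrt_atTop.comp <|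
      (tendsto_natCast_atTop_atTop.atTop_add tendsto_const_nhds).const_mul_atTop two_pos
  simp_rw [hratio]
  have hone : Tendsto (fun _ : ℕ ↦ (1 : ℝ)) atTop (𝓝 1) := tendsto_const_nhds
  simpa using tendsto_const_nhds.mul (((hone.add hinv).mul (hone.add hfactor)).pow 2)

end oscBound

theorem norm_mul_mul_le_mul_sq {s a b B : ℝ} (hs : 0 ≤ s) (ha : |a| ≤ B) (hb : |b| ≤ B) :
    ‖s * a * b‖ ≤ s * B ^ 2 := by
  rw [Real.norm_eq_abs, abs_mul, abs_mul, abs_of_nonneg hs, mul_assoc, sq]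
  gcongr
  exact (abs_nonneg a).trans ha

theorem hasDerivAt_tsum_of_forall_mem_ball {f f' : ℕ → ℝ → ℝ} {m : ℕ → ℝ} {x ε : ℝ}
    (hε : 0 < ε) (hm : Summable m) (hf : ∀ k, ∀ u ∈ Metric.ball x ε, HasDerivAt (f k) (f' k u) u)
    (hf' : ∀ k, ∀ u ∈ Metric.ball x ε, ‖f' k u‖ ≤ m k) (hx : Summable fun k ↦ f k x) :
    HasDerivAt (fun u ↦ ∑' k, f k u) (∑' k, f' k x) x :=
  hasDerivAt_tsum_of_isPreconnected hm Metric.isOpen_ball (convex_ball x ε).isPreconnected hf hf'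
    (Metric.mem_ball_self hε) hx (Metric.mem_ball_self hε)

theorem hermiteTail_ladder_identity (n : ℕ) (σ x y : ℝ)
    (hT : Summable fun j : ℕ ↦ σ ^ (n + j) * oscFun (n + j) x * oscFun (n + j) y)
    (hA : Summable fun j : ℕ ↦ σ ^ (n + j) * deriv (oscFun (n + j)) x * oscFun (n + j) y)
    (hB : Summable fun j : ℕ ↦ σ ^ (n + j) * oscFun (n + j) x * deriv (oscFun (n + j)) y) :
    (x * hermiteTail n σ x y
        + (∑' j : ℕ, σ ^ (n + j) * deriv (oscFun (n + j)) x * oscFun (n + j) y))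
      - σ * (y * hermiteTail n σ x y
        - (∑' j : ℕ, σ ^ (n + j) * oscFun (n + j) x * deriv (oscFun (n + j)) y))
    = 2 * σ ^ n * √(n / 2) * oscFun (n - 1) x * oscFun n y := by
  set g : ℕ → ℝ :=
    fun j ↦ σ ^ (n + j) * (√(2 * (n + j : ℕ)) * oscFun (n + j - 1) x) * oscFun (n + j) y
  have hlower : ∀ j, x * (σ ^ (n + j) * oscFun (n + j) x * oscFun (n + j) y)
      + σ ^ (n + j) * deriv (oscFun (n + j)) x * oscFun (n + j) y = g j := fun j ↦ by
    linear_combination σ ^ (n + j) * oscFun (n + j) y * mul_oscFun_add_deriv (n + j) x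
  have hraise : ∀ j, σ * (y * (σ ^ (n + j) * oscFun (n + j) x * oscFun (n + j) y)
      - σ ^ (n + j) * oscFun (n + j) x * deriv (oscFun (n + j)) y) = g (j + 1) := fun j ↦ by
    simp only [g, ← add_assoc, Nat.add_sub_cancel, Nat.cast_succ]
    linear_combination σ ^ (n + j) * σ * oscFun (n + j) x * mul_oscFun_sub_deriv (n + j) y
  have hg : Summable g := ((hT.mul_left x).add hA).congr hlower
  have hg0 : g 0 = 2 * σ ^ n * √(n / 2) * oscFun (n - 1) x * oscFun n y := by
    have : √(2 * (n : ℝ)) = 2 * √(n / 2) := by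
      rw [show 2 * (n : ℝ) = 2 ^ 2 * (n / 2) by ring, Real.sqrt_mul (by positivity),
        Real.sqrt_sq zero_le_two]
    simp only [g, add_zero, this]
    ring
  rw [hermiteTail, ← tsum_mul_left, ← tsum_mul_left, ← (hT.mul_left x).tsum_add hA,
    ← (hT.mul_left y).tsum_sub hB, ← tsum_mul_left, tsum_congr hlower, tsum_congr hraise,
    hg.tsum_eq_zero_add, hg0]
  ring

theorem hermiteTail_identity_general (n : ℕ) (σ : ℝ) (hσ0 : 0 < σ) (hσ1 : σ < 1)
    (x y : ℝ) :
    Summable (fun j : ℕ => σ ^ (n + j) * oscFun (n + j) x * oscFun (n + j) y) ∧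
    Summable (fun j : ℕ => σ ^ (n + j) * deriv (oscFun (n + j)) x * oscFun (n + j) y) ∧
    Summable (fun j : ℕ => σ ^ (n + j) * oscFun (n + j) x * deriv (oscFun (n + j)) y) ∧
    HasDerivAt (fun u => hermiteTail n σ u y)
      (∑' j : ℕ, σ ^ (n + j) * deriv (oscFun (n + j)) x * oscFun (n + j) y) x ∧
    HasDerivAt (fun v => hermiteTail n σ x v)
      (∑' j : ℕ, σ ^ (n + j) * oscFun (n + j) x * deriv (oscFun (n + j)) y) y ∧
    (x * hermiteTail n σ x y
        + (∑' j : ℕ, σ ^ (n + j) * deriv (oscFun (n + j)) x * oscFun (n + j) y))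
      - σ * (y * hermiteTail n σ x y
        - (∑' j : ℕ, σ ^ (n + j) * oscFun (n + j) x * deriv (oscFun (n + j)) y))
    = 2 * σ ^ n * Real.sqrt (n / 2) * oscFun (n - 1) x * oscFun n y := by
  set r := |x| + |y| + 1
  have hr : 0 ≤ r := by positivity
  have hx : ∀ u ∈ Metric.ball x 1, |u| ≤ r := fun u hu ↦ by
    have : |u| < |x| + 1 := by simpa using norm_lt_of_mem_ball hu
    linarith [abs_nonneg y]
  have hy : ∀ v ∈ Metric.ball y 1, |v| ≤ r := fun v hv ↦ by
    have : |v| < |y| + 1 := by simpa using norm_lt_of_mem_ball hv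
    linarith [abs_nonneg x]
  have hm : Summable fun j ↦ σ ^ (n + j) * oscBound r (n + j) ^ 2 := by
    simpa [add_comm n] using (summable_nat_add_iff n).2 (summable_pow_mul_oscBound_sq hσ0 hσ1 hr)
  have hbound {j : ℕ} {a b : ℝ} (ha : |a| ≤ oscBound r (n + j)) (hb : |b| ≤ oscBound r (n + j)) :
      ‖σ ^ (n + j) * a * b‖ ≤ σ ^ (n + j) * oscBound r (n + j) ^ 2 :=
    norm_mul_mul_le_mul_sq (by positivity) ha hb
  have hφ {k : ℕ} {u : ℝ} (hu : |u| ≤ r) := abs_oscFun_le_oscBound k hu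
  have hφ' {k : ℕ} {u : ℝ} (hu : |u| ≤ r) := abs_deriv_oscFun_le_oscBound k hu
  have hxr := hx x (Metric.mem_ball_self one_pos)
  have hyr := hy y (Metric.mem_ball_self one_pos)
  have hT := hm.of_norm_bounded fun j ↦ hbound (hφ hxr) (hφ hyr)
  have hA := hm.of_norm_bounded fun j ↦ hbound (hφ' hxr) (hφ hyr)
  have hB := hm.of_norm_bounded fun j ↦ hbound (hφ hxr) (hφ' hyr)
  refine ⟨hT, hA, hB, ?_, ?_, hermiteTail_ladder_identity n σ x y hT hA hB⟩
  · refine hasDerivAt_tsum_of_forall_mem_ball one_pos hm (fun j u _ ↦ ?_)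
      (fun j u hu ↦ hbound (hφ' (hx u hu)) (hφ hyr)) hT
    exact (((hasDerivAt_oscFun _ u).differentiableAt.hasDerivAt).const_mul _).mul_const _
  · refine hasDerivAt_tsum_of_forall_mem_ball one_pos hm (fun j v _ ↦ ?_)
      (fun j v hv ↦ hbound (hφ hxr) (hφ' (hy v hv))) hT
    exact ((hasDerivAt_oscFun _ v).differentiableAt.hasDerivAt).const_mul _

/-- **Tail series identity in the proof of Lemma 3 (Section V of Tracy–Widom,
"Differential Equations for Dyson Processes").**  For `0 < σ < 1` the series
`T(x, y) = Σ_{k=n}^∞ σ^k φ_k(x) φ_k(y)` converges, is differentiable in `x` and in `y`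
with derivatives given by term-wise differentiation, and satisfies
`(x + ∂_x)T(x, y) − σ(y − ∂_y)T(x, y) = 2 σ^n a_n φ_{n−1}(x) φ_n(y)` with `a_n = √(n/2)`. -/
theorem hermiteTail_identity (n : ℕ) (hn : 0 < n) (σ : ℝ) (hσ0 : 0 < σ) (hσ1 : σ < 1)
    (x y : ℝ) :
    Summable (fun j : ℕ => σ ^ (n + j) * oscFun (n + j) x * oscFun (n + j) y) ∧
    Summable (fun j : ℕ => σ ^ (n + j) * deriv (oscFun (n + j)) x * oscFun (n + j) y) ∧
    Summable (fun j : ℕ => σ ^ (n + j) * oscFun (n + j) x * deriv (oscFun (n + j)) y) ∧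
    HasDerivAt (fun u => hermiteTail n σ u y)
      (∑' j : ℕ, σ ^ (n + j) * deriv (oscFun (n + j)) x * oscFun (n + j) y) x ∧
    HasDerivAt (fun v => hermiteTail n σ x v)
      (∑' j : ℕ, σ ^ (n + j) * oscFun (n + j) x * deriv (oscFun (n + j)) y) y ∧
    (x * hermiteTail n σ x y
        + (∑' j : ℕ, σ ^ (n + j) * deriv (oscFun (n + j)) x * oscFun (n + j) y))
      - σ * (y * hermiteTail n σ x y
        - (∑' j : ℕ, σ ^ (n + j) * oscFun (n + j) x * deriv (oscFun (n + j)) y))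
    = 2 * σ ^ n * Real.sqrt (n / 2) * oscFun (n - 1) x * oscFun n y :=
  hermiteTail_identity_general n σ hσ0 hσ1 x y
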